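/- arXiv:2302.08621 — 2 statements merged into one kernel-verified Lean document; each statement's English description precedes it below -/
import Mathlib

section
/- Let (X, d_X) be a finite pseudometric space, with m^X and m^Y irreducible aperiodic transition kernels on X and cost C(x,x') = d_X(x,x'). Define C^{(0)} := C and C^{(l+1)}_{ij} := d_W(m^X_i, m^Y_j; C^{(l)}), and let c := lim_{k→∞} d_WL^{(k)}((X, m^X, μ^X), (X, m^Y, μ^Y); C) where μ^X, μ^Y are the unique stationary distributions. Then there exists ρ ∈ [0,1), depending on m^X and m^Y, such that for all k ∈ ℕ and all (i,j): |C^{(k)}_{ij} − c| ≤ 2 ρ^k ‖C‖_∞; i.e., the matrices C^{(k)} converge exponentially fast to the constant matrix with value c. -/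
open scoped BigOperators
open Filter Topology

/-- A probability vector on a finite type. -/
def IsProb {X : Type*} [Fintype X] (ν : X → ℝ) : Prop :=
  (∀ x, 0 ≤ ν x) ∧ ∑ x, ν x = 1

/-- `μ` is a coupling of `α` and `β`. -/
def IsCoupling {X Y : Type*} [Fintype X] [Fintype Y]
    (μ : X × Y → ℝ) (α : X → ℝ) (β : Y → ℝ) : Prop :=
  (∀ z, 0 ≤ μ z) ∧ (∀ x, ∑ y, μ (x, y) = α x) ∧ (∀ y, ∑ x, μ (x, y) = β y)

/-- A finite Markov chain: a transition kernel together with an initial distribution. -/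
structure MarkovChain (X : Type*) [Fintype X] where
  kernel : X → X → ℝ
  init : X → ℝ
  kernel_prob : ∀ x, IsProb (kernel x)
  init_prob : IsProb init

/-- A Markovian coupling between two finite Markov chains.  `trans t` is the
transition coupling used from time `t` to time `t+1` (i.e. `m^{(t+1)}`). -/
structure MarkovCoupling {X Y : Type*} [Fintype X] [Fintype Y]
    (MX : MarkovChain X) (MY : MarkovChain Y) where
  init : X × Y → ℝ
  trans : ℕ → X × Y → X × Y → ℝ
  init_coupling : IsCoupling init MX.init MY.init
  trans_coupling : ∀ t xy, IsCoupling (trans t xy) (MX.kernel xy.1) (MY.kernel xy.2)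

/-- Time-`t` law determined by an initial distribution and step kernels. -/
noncomputable def lawAux {X Y : Type*} [Fintype X] [Fintype Y]
    (ν : X × Y → ℝ) (m : ℕ → X × Y → X × Y → ℝ) : ℕ → X × Y → ℝ
  | 0 => ν
  | t + 1 => fun z => ∑ w : X × Y, m t w z * lawAux ν m t w

/-- The time-`t` law of a Markovian coupling. -/
noncomputable def MarkovCoupling.law {X Y : Type*} [Fintype X] [Fintype Y]
    {MX : MarkovChain X} {MY : MarkovChain Y} (π : MarkovCoupling MX MY) :
    ℕ → X × Y → ℝ :=
  lawAux π.init π.trans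

/-- `p` is a probability distribution on `ℕ`. -/
def IsProbNat (p : ℕ → ℝ) : Prop := (∀ t, 0 ≤ p t) ∧ HasSum p 1

/-- The Optimal Transport Markov (OTM) distance associated to `p`. -/
noncomputable def dOTM {X Y : Type*} [Fintype X] [Fintype Y] (p : ℕ → ℝ)
    (MX : MarkovChain X) (MY : MarkovChain Y) (C : X × Y → ℝ) : ℝ :=
  ⨅ π : MarkovCoupling MX MY, ∑' t, p t * ∑ z : X × Y, C z * π.law t z

/-- The Dirac mass at `k` on `ℕ`. -/
noncomputable def diracN (k : ℕ) : ℕ → ℝ := fun t => if t = k then 1 else 0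

/-- The depth-`k` WL distance, `d_WL^{(k)} = d_OTM^{δ_k}`. -/
noncomputable def dWL {X Y : Type*} [Fintype X] [Fintype Y] (k : ℕ)
    (MX : MarkovChain X) (MY : MarkovChain Y) (C : X × Y → ℝ) : ℝ :=
  dOTM (diracN k) MX MY C

/-- The optimal transport cost between `α` and `β` with cost matrix `C`. -/
noncomputable def dW {X Y : Type*} [Fintype X] [Fintype Y]
    (α : X → ℝ) (β : Y → ℝ) (C : X × Y → ℝ) : ℝ :=
  ⨅ μ : {μ : X × Y → ℝ // IsCoupling μ α β}, ∑ z : X × Y, C z * μ.1 z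

/-- `d` is a pseudometric on `X`. -/
def IsPseudometric {X : Type*} (d : X → X → ℝ) : Prop :=
  (∀ x y, 0 ≤ d x y) ∧ (∀ x, d x x = 0) ∧ (∀ x y, d x y = d y x) ∧
  (∀ x y z, d x z ≤ d x y + d y z)

/-- The `t`-step transition kernel. -/
noncomputable def kpow {X : Type*} [Fintype X] [DecidableEq X]
    (m : X → X → ℝ) : ℕ → X → X → ℝ
  | 0 => fun x x' => if x = x' then 1 else 0
  | t + 1 => fun x x' => ∑ y, m x y * kpow m t y x'

/-- A transition kernel is irreducible if every state can reach every state in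
some positive finite number of steps. -/
def KernelIrreducible {X : Type*} [Fintype X] [DecidableEq X] (m : X → X → ℝ) : Prop :=
  ∀ x x', ∃ t, 1 ≤ t ∧ 0 < kpow m t x x'

/-- A transition kernel is aperiodic if for every state the gcd of its return
times is `1` (i.e. every common divisor of the return times is `1`). -/
def KernelAperiodic {X : Type*} [Fintype X] [DecidableEq X] (m : X → X → ℝ) : Prop :=
  ∀ x, ∀ d : ℕ, (∀ t, 1 ≤ t → 0 < kpow m t x x → d ∣ t) → d = 1

/-- `μ` is stationary for the transition kernel `m`. -/
def IsStationaryFor {X : Type*} [Fintype X] (m : X → X → ℝ) (μ : X → ℝ) : Prop :=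
  ∀ x', ∑ x, m x x' * μ x = μ x'

/-- The recursively defined cost matrices `C^{(l)}` of the WL iteration. -/
noncomputable def CmatWL {X : Type*} [Fintype X]
    (mX mY : X → X → ℝ) (C : X × X → ℝ) : ℕ → X × X → ℝ
  | 0 => C
  | l + 1 => fun z => dW (mX z.1) (mY z.2) (CmatWL mX mY C l)

/-- The entrywise supremum norm. -/
noncomputable def supNorm {Z : Type*} [Fintype Z] (C : Z → ℝ) : ℝ := ⨆ z, |C z|

/-!
The entries of `C^{(k)}` lie between their minimum and maximum, which are monotone in `k`. To
compare `C^{(k+T)}(i, j)` with `C^{(k+T)}(i', j')`, glue to an optimal coupling started at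
`(i', j')` the coalescing couplings of the `X`-chains from `i, i'` and of the `Y`-chains from
`j, j'`: the two costs can then differ only while one of these pairs has not met. Irreducibility
and aperiodicity make some power of each kernel positive, so for `T` large this has probability
at most `1 / 2`, and the spread `max - min` of `C^{(k)}` halves every `T` steps. The depth-`k` WL
distance lies between the same minimum and maximum (optimal transition couplings realise
`C^{(k)}` from any initial coupling), so it converges to the common limit `c`.
-/

open Finset

section Coupling

variable {X Y : Type*} [Fintype X] [Fintype Y]

lemma IsProb.le_one {ν : X → ℝ} (hν : IsProb ν) (x : X) : ν x ≤ 1 :=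
  hν.2 ▸ single_le_sum (fun y _ => hν.1 y) (mem_univ x)

lemma IsProb.nonempty {ν : X → ℝ} (hν : IsProb ν) : Nonempty X := by
  by_contra h
  have := hν.2
  simp_all

lemma IsProb.sum_mul_le_one {ν ν' : X → ℝ} (hν : IsProb ν) (hν' : IsProb ν') :
    ∑ x, ν x * ν' x ≤ 1 :=
  hν.2 ▸ sum_le_sum fun x _ => mul_le_of_le_one_right (hν.1 x) (hν'.le_one x)

lemma isCoupling_prod {α : X → ℝ} {β : Y → ℝ} (hα : IsProb α) (hβ : IsProb β) :
    IsCoupling (fun z => α z.1 * β z.2) α β :=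
  ⟨fun z => mul_nonneg (hα.1 _) (hβ.1 _), fun x => by simp [← mul_sum, hβ.2],
    fun y => by simp [← sum_mul, hα.2]⟩

variable {μ : X × Y → ℝ} {α : X → ℝ} {β : Y → ℝ}

lemma IsCoupling.sum_eq_one (h : IsCoupling μ α β) (hα : IsProb α) : ∑ z, μ z = 1 := by
  rw [Fintype.sum_prod_type, ← hα.2]
  exact sum_congr rfl fun x _ => h.2.1 x

lemma IsCoupling.isProb (h : IsCoupling μ α β) (hα : IsProb α) : IsProb μ :=
  ⟨h.1, h.sum_eq_one hα⟩

lemma IsCoupling.left_nonneg (h : IsCoupling μ α β) (x : X) : 0 ≤ α x :=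
  h.2.1 x ▸ sum_nonneg fun y _ => h.1 (x, y)

lemma IsCoupling.right_nonneg (h : IsCoupling μ α β) (y : Y) : 0 ≤ β y :=
  h.2.2 y ▸ sum_nonneg fun x _ => h.1 (x, y)

lemma IsCoupling.eq_zero_of_left (h : IsCoupling μ α β) {x : X} (hx : α x = 0) (y : Y) :
    μ (x, y) = 0 :=
  (sum_eq_zero_iff_of_nonneg fun y _ => h.1 (x, y)).1 (hx ▸ h.2.1 x) y (mem_univ y)

lemma IsCoupling.eq_zero_of_right (h : IsCoupling μ α β) {y : Y} (hy : β y = 0) (x : X) :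
    μ (x, y) = 0 :=
  (sum_eq_zero_iff_of_nonneg fun x _ => h.1 (x, y)).1 (hy ▸ h.2.2 y) x (mem_univ x)

lemma IsCoupling.sum_div_mul (h : IsCoupling μ α β) {y : Y} {f : ℝ} (hf : β y = 0 → f = 0) :
    ∑ x, μ (x, y) / β y * f = f := by
  rw [← sum_mul, ← sum_div, h.2.2 y]
  by_cases hy : β y = 0
  · simp [hf hy]
  · rw [div_self hy, one_mul]

lemma IsCoupling.le_sum_mul {C : X × Y → ℝ} {b : ℝ} (h : IsCoupling μ α β) (hα : IsProb α)
    (hb : ∀ z, b ≤ C z) : b ≤ ∑ z, C z * μ z := by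
  calc b = ∑ z, b * μ z := by rw [← mul_sum, h.sum_eq_one hα, mul_one]
    _ ≤ ∑ z, C z * μ z := sum_le_sum fun z _ => mul_le_mul_of_nonneg_right (hb z) (h.1 z)

lemma IsCoupling.sum_mul_le {C : X × Y → ℝ} {b : ℝ} (h : IsCoupling μ α β) (hα : IsProb α)
    (hb : ∀ z, C z ≤ b) : ∑ z, C z * μ z ≤ b := by
  calc ∑ z, C z * μ z ≤ ∑ z, b * μ z :=
        sum_le_sum fun z _ => mul_le_mul_of_nonneg_right (hb z) (h.1 z)
    _ = b := by rw [← mul_sum, h.sum_eq_one hα, mul_one]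

lemma isCompact_setOf_isCoupling (hα : IsProb α) : IsCompact {μ | IsCoupling μ α β} := by
  have hS : {μ | IsCoupling μ α β} = (⋂ z, {μ : X × Y → ℝ | 0 ≤ μ z}) ∩
      (⋂ x, {μ | ∑ y, μ (x, y) = α x}) ∩ ⋂ y, {μ | ∑ x, μ (x, y) = β y} := by
    ext μ; simp [IsCoupling, and_assoc]
  refine (isCompact_Icc (a := 0) (b := 1)).of_isClosed_subset ?_
    fun μ hμ => ⟨hμ.1, fun z => (hμ.isProb hα).le_one z⟩
  rw [hS]
  exact ((isClosed_iInter fun z => isClosed_le continuous_const (continuous_apply z)).inter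
    (isClosed_iInter fun x => isClosed_eq (by fun_prop) continuous_const)).inter
    (isClosed_iInter fun y => isClosed_eq (by fun_prop) continuous_const)

lemma exists_isCoupling_isMinOn (hα : IsProb α) (hβ : IsProb β) (C : X × Y → ℝ) :
    ∃ μ, IsCoupling μ α β ∧ ∀ ν, IsCoupling ν α β → ∑ z, C z * μ z ≤ ∑ z, C z * ν z := by
  obtain ⟨μ, hμ, hmin⟩ := (isCompact_setOf_isCoupling (β := β) hα).exists_isMinOn
    ⟨_, isCoupling_prod hα hβ⟩
    (by fun_prop : Continuous fun μ : X × Y → ℝ => ∑ z, C z * μ z).continuousOn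
  exact ⟨μ, hμ, fun ν hν => hmin hν⟩

lemma exists_isCoupling_sum_eq_dW (hα : IsProb α) (hβ : IsProb β) (C : X × Y → ℝ) :
    ∃ μ, IsCoupling μ α β ∧ ∑ z, C z * μ z = dW α β C ∧
      ∀ ν, IsCoupling ν α β → dW α β C ≤ ∑ z, C z * ν z := by
  obtain ⟨μ, hμ, hmin⟩ := exists_isCoupling_isMinOn hα hβ C
  have : Nonempty {ν : X × Y → ℝ // IsCoupling ν α β} := ⟨⟨μ, hμ⟩⟩
  have hbdd : BddBelow (Set.range fun ν : {ν // IsCoupling ν α β} => ∑ z, C z * ν.1 z) :=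
    ⟨_, by rintro _ ⟨ν, rfl⟩; exact hmin ν.1 ν.2⟩
  have hdW : dW α β C = ∑ z, C z * μ z :=
    le_antisymm (ciInf_le hbdd ⟨μ, hμ⟩) (le_ciInf fun ν => hmin ν.1 ν.2)
  exact ⟨μ, hμ, hdW.symm, fun ν hν => hdW ▸ hmin ν hν⟩

lemma dW_le_sum_mul (hα : IsProb α) (hβ : IsProb β) {C : X × Y → ℝ} (hμ : IsCoupling μ α β) :
    dW α β C ≤ ∑ z, C z * μ z :=
  (exists_isCoupling_sum_eq_dW hα hβ C).choose_spec.2.2 μ hμ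

lemma le_dW_of_le (hα : IsProb α) (hβ : IsProb β) {C : X × Y → ℝ} {b : ℝ}
    (hb : ∀ z, b ≤ C z) : b ≤ dW α β C := by
  obtain ⟨μ, hμ, hμC, -⟩ := exists_isCoupling_sum_eq_dW hα hβ C
  exact hμC ▸ hμ.le_sum_mul hα hb

lemma dW_le_of_le (hα : IsProb α) (hβ : IsProb β) {C : X × Y → ℝ} {b : ℝ}
    (hb : ∀ z, C z ≤ b) : dW α β C ≤ b :=
  (dW_le_sum_mul hα hβ (isCoupling_prod hα hβ)).trans
    ((isCoupling_prod hα hβ).sum_mul_le hα hb)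

end Coupling

section Gluing

variable {X Y : Type*} [Fintype X] [Fintype Y] {α α' : X → ℝ} {β β' : Y → ℝ}
  {γX : X × X → ℝ} {γY : Y × Y → ℝ}

lemma exists_gluing {κ : X × Y → ℝ} (hγX : IsCoupling γX α α') (hγY : IsCoupling γY β β')
    (hκ : IsCoupling κ α' β') :
    ∃ Q : X → Y → X → Y → ℝ, (∀ a b a' b', 0 ≤ Q a b a' b') ∧
      (∀ a' b', ∑ a, ∑ b, Q a b a' b' = κ (a', b')) ∧
      (∀ a a', ∑ b, ∑ b', Q a b a' b' = γX (a, a')) ∧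
      (∀ b b', ∑ a, ∑ a', Q a b a' b' = γY (b, b')) := by
  -- Where `α' a' = 0` or `β' b' = 0` the divisions give `0`, and so does `κ (a', b')`.
  refine ⟨fun a b a' b' => γX (a, a') / α' a' * (γY (b, b') / β' b' * κ (a', b')),
    fun a b a' b' => ?_, fun a' b' => ?_, fun a a' => ?_, fun b b' => ?_⟩
  · exact mul_nonneg (div_nonneg (hγX.1 _) (hκ.left_nonneg a'))
      (mul_nonneg (div_nonneg (hγY.1 _) (hκ.right_nonneg b')) (hκ.1 _))
  · simp only [← mul_sum, hγY.sum_div_mul (hκ.eq_zero_of_right · a'),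
      hγX.sum_div_mul (hκ.eq_zero_of_left · b')]
  · rw [sum_comm]
    simp only [← mul_sum, hγY.sum_div_mul (hκ.eq_zero_of_right · a'), hκ.2.1 a']
    exact div_mul_cancel_of_imp (hγX.eq_zero_of_right · a)
  · rw [sum_comm]
    simp only [mul_left_comm (γX _ / _), ← mul_sum,
      hγX.sum_div_mul (hκ.eq_zero_of_left · b'), hκ.2.2 b']
    exact div_mul_cancel_of_imp (hγY.eq_zero_of_right · b)

/-- Glue `γX` and `γY` to an optimal coupling of `α'` and `β'`. -/
theorem dW_le_dW_add (hα : IsProb α) (hβ : IsProb β) (hα' : IsProb α') (hβ' : IsProb β')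
    (hγX : IsCoupling γX α α') (hγY : IsCoupling γY β β') {G : X × Y → ℝ}
    {cX : X × X → ℝ} {cY : Y × Y → ℝ}
    (hG : ∀ a b a' b', G (a, b) ≤ G (a', b') + cX (a, a') + cY (b, b')) :
    dW α β G ≤ dW α' β' G + ∑ p, cX p * γX p + ∑ q, cY q * γY q := by
  obtain ⟨κ, hκ, hκG, -⟩ := exists_isCoupling_sum_eq_dW hα' hβ' G
  obtain ⟨Q, hQ, hQκ, hQX, hQY⟩ := exists_gluing hγX hγY hκ
  have hμ : IsCoupling (fun z => ∑ a', ∑ b', Q z.1 z.2 a' b') α β := by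
    refine ⟨fun z => sum_nonneg fun _ _ => sum_nonneg fun _ _ => hQ _ _ _ _,
      fun a => ?_, fun b => ?_⟩
    · rw [sum_comm, ← hγX.2.1 a]
      exact sum_congr rfl fun a' _ => hQX a a'
    · calc ∑ a, ∑ a', ∑ b', Q a b a' b' = ∑ a, ∑ b', ∑ a', Q a b a' b' :=
            sum_congr rfl fun _ _ => sum_comm
        _ = ∑ b', ∑ a, ∑ a', Q a b a' b' := sum_comm
        _ = β b := by rw [← hγY.2.1 b]; exact sum_congr rfl fun b' _ => hQY b b'
  have hG_part : ∑ a, ∑ b, ∑ a', ∑ b', G (a', b') * Q a b a' b' = dW α' β' G :=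
    calc _ = ∑ a, ∑ a', ∑ b, ∑ b', G (a', b') * Q a b a' b' :=
          sum_congr rfl fun _ _ => sum_comm
      _ = ∑ a', ∑ a, ∑ b', ∑ b, G (a', b') * Q a b a' b' := by
          rw [sum_comm]; exact sum_congr rfl fun _ _ => sum_congr rfl fun _ _ => sum_comm
      _ = ∑ a', ∑ b', ∑ a, ∑ b, G (a', b') * Q a b a' b' :=
          sum_congr rfl fun _ _ => sum_comm
      _ = dW α' β' G := by simp only [← mul_sum, hQκ, ← hκG, Fintype.sum_prod_type]
  have hX_part : ∑ a, ∑ b, ∑ a', ∑ b', cX (a, a') * Q a b a' b' = ∑ p, cX p * γX p :=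
    calc _ = ∑ a, ∑ a', ∑ b, ∑ b', cX (a, a') * Q a b a' b' :=
          sum_congr rfl fun _ _ => sum_comm
      _ = ∑ p, cX p * γX p := by simp only [← mul_sum, hQX, Fintype.sum_prod_type]
  have hY_part : ∑ a, ∑ b, ∑ a', ∑ b', cY (b, b') * Q a b a' b' = ∑ q, cY q * γY q :=
    calc _ = ∑ b, ∑ a, ∑ b', ∑ a', cY (b, b') * Q a b a' b' := by
          rw [sum_comm]; exact sum_congr rfl fun _ _ => sum_congr rfl fun _ _ => sum_comm
      _ = ∑ b, ∑ b', ∑ a, ∑ a', cY (b, b') * Q a b a' b' :=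
          sum_congr rfl fun _ _ => sum_comm
      _ = ∑ q, cY q * γY q := by simp only [← mul_sum, hQY, Fintype.sum_prod_type]
  calc dW α β G ≤ ∑ z, G z * ∑ a', ∑ b', Q z.1 z.2 a' b' := dW_le_sum_mul hα hβ hμ
    _ = ∑ a, ∑ b, ∑ a', ∑ b', G (a, b) * Q a b a' b' := by
        simp only [Fintype.sum_prod_type, mul_sum]
    _ ≤ ∑ a, ∑ b, ∑ a', ∑ b', (G (a', b') + cX (a, a') + cY (b, b')) * Q a b a' b' := by
        gcongr with a _ b _ a' _ b' _
        · exact hQ a b a' b'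
        · exact hG a b a' b'
    _ = dW α' β' G + ∑ p, cX p * γX p + ∑ q, cY q * γY q := by
        simp only [add_mul, sum_add_distrib, hG_part, hX_part, hY_part]

end Gluing
section KernelPower

variable {X : Type*} [Fintype X] [DecidableEq X] {m : X → X → ℝ}

lemma kpow_add (m : X → X → ℝ) (s t : ℕ) (x x' : X) :
    kpow m (s + t) x x' = ∑ y, kpow m s x y * kpow m t y x' := by
  induction s generalizing x with
  | zero => simp [kpow]
  | succ s ih =>
    rw [Nat.add_right_comm]
    simp only [kpow, ih, mul_sum, sum_mul, mul_assoc]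
    exact sum_comm

lemma kpow_nonneg (hm : ∀ x, IsProb (m x)) (t : ℕ) (x x' : X) : 0 ≤ kpow m t x x' := by
  induction t generalizing x with
  | zero => simp only [kpow]; split_ifs <;> norm_num
  | succ t ih => exact sum_nonneg fun y _ => mul_nonneg ((hm x).1 y) (ih y)

lemma kpow_isProb (hm : ∀ x, IsProb (m x)) (t : ℕ) (x : X) : IsProb (kpow m t x) := by
  refine ⟨kpow_nonneg hm t x, ?_⟩
  induction t generalizing x with
  | zero => simp [kpow]
  | succ t ih => simp only [kpow]; rw [sum_comm]; simp [← mul_sum, ih, (hm x).2]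

lemma kpow_pos_add (hm : ∀ x, IsProb (m x)) {s t : ℕ} {x y x' : X} (hs : 0 < kpow m s x y)
    (ht : 0 < kpow m t y x') : 0 < kpow m (s + t) x x' := by
  rw [kpow_add]
  exact (mul_pos hs ht).trans_le (single_le_sum (fun y _ =>
    mul_nonneg (kpow_nonneg hm s x y) (kpow_nonneg hm t y x')) (mem_univ y))

/-- The return times to `x` form an additive submonoid of `ℕ` with gcd `1`, hence contain every
large enough integer. -/
lemma eventually_kpow_self_pos (hm : ∀ x, IsProb (m x)) (haper : KernelAperiodic m) (x : X) :
    ∀ᶠ t in atTop, 0 < kpow m t x x := by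
  let S : AddSubmonoid ℕ :=
    { carrier := {t | 0 < kpow m t x x}
      zero_mem' := by simp [kpow]
      add_mem' := kpow_pos_add hm }
  have hgcd : Nat.setGcd S = 1 :=
    haper x _ fun t _ ht => Nat.setGcd_dvd_of_mem (s := S) ht
  obtain ⟨n, hn⟩ := Nat.exists_mem_closure_of_ge (S : Set ℕ)
  filter_upwards [eventually_ge_atTop n] with t ht
  have := hn t ht (hgcd ▸ one_dvd t)
  rwa [AddSubmonoid.closure_eq] at this

lemma eventually_kpow_pos (hm : ∀ x, IsProb (m x)) (hirr : KernelIrreducible m)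
    (haper : KernelAperiodic m) : ∀ᶠ t in atTop, ∀ x x', 0 < kpow m t x x' := by
  simp only [eventually_all]
  intro x x'
  obtain ⟨s, -, hs⟩ := hirr x x'
  filter_upwards [(tendsto_sub_atTop_nat s).eventually (eventually_kpow_self_pos hm haper x),
    eventually_ge_atTop s] with t ht hst
  simpa [Nat.sub_add_cancel hst] using kpow_pos_add hm ht hs

end KernelPower

section Coalescing

variable {X : Type*} [Fintype X] [DecidableEq X] {m : X → X → ℝ}

noncomputable def coalescingKernel (m : X → X → ℝ) (p q : X × X) : ℝ :=
  if p.1 = p.2 then (if q.1 = q.2 then m p.1 q.1 else 0) else m p.1 q.1 * m p.2 q.2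

lemma isCoupling_coalescingKernel (hm : ∀ x, IsProb (m x)) (p : X × X) :
    IsCoupling (coalescingKernel m p) (m p.1) (m p.2) := by
  by_cases h : p.1 = p.2
  · have hq : coalescingKernel m p = fun q => if q.1 = q.2 then m p.1 q.1 else 0 := by
      ext q; simp [coalescingKernel, h]
    refine hq ▸ ⟨fun q => ?_, fun a => ?_, fun b => ?_⟩
    · dsimp only; split_ifs <;> simp [(hm _).1]
    · simp [eq_comm (a := a)]
    · simp [h]
  · have hq : coalescingKernel m p = fun q => m p.1 q.1 * m p.2 q.2 := by
      ext q; simp [coalescingKernel, h]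
    exact hq ▸ isCoupling_prod (hm p.1) (hm p.2)

/-- The probability that the coalescing chain started at `p` has not met by time `t`. -/
noncomputable def notMet (m : X → X → ℝ) : ℕ → X × X → ℝ
  | 0 => fun p => if p.1 = p.2 then 0 else 1
  | t + 1 => fun p => ∑ q, coalescingKernel m p q * notMet m t q

lemma notMet_nonneg (hm : ∀ x, IsProb (m x)) (t : ℕ) (p : X × X) : 0 ≤ notMet m t p := by
  induction t generalizing p with
  | zero => simp only [notMet]; split_ifs <;> norm_num
  | succ t ih =>
    exact sum_nonneg fun q _ => mul_nonneg ((isCoupling_coalescingKernel hm p).1 q) (ih q)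

lemma notMet_diag (m : X → X → ℝ) (t : ℕ) (x : X) : notMet m t (x, x) = 0 := by
  induction t generalizing x with
  | zero => simp [notMet]
  | succ t ih =>
    refine sum_eq_zero fun q _ => ?_
    by_cases hq : q.1 = q.2
    · rw [← Prod.mk.eta (p := q), ← hq, ih, mul_zero]
    · simp [coalescingKernel, hq]

lemma notMet_add_le (hm : ∀ x, IsProb (m x)) {T : ℕ} {θ : ℝ}
    (h : ∀ q, notMet m T q ≤ θ * notMet m 0 q) (t : ℕ) (p : X × X) :
    notMet m (T + t) p ≤ θ * notMet m t p := by
  induction t generalizing p with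
  | zero => exact h p
  | succ t ih =>
    simp only [notMet, mul_sum, mul_left_comm θ]
    exact sum_le_sum fun q _ =>
      mul_le_mul_of_nonneg_left (ih q) ((isCoupling_coalescingKernel hm p).1 q)

/-- Before the chains meet they move independently, so they have not met by time `t` with
probability at most that of two independent copies being apart at time `t`. -/
lemma notMet_le_one_sub (hm : ∀ x, IsProb (m x)) (t : ℕ) (x x' : X) :
    notMet m t (x, x') ≤ 1 - ∑ c, kpow m t x c * kpow m t x' c := by
  induction t generalizing x x' with
  | zero => by_cases hx : x = x' <;> simp [notMet, kpow, hx]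
  | succ t ih =>
    by_cases hx : x = x'
    · rw [hx, notMet_diag, sub_nonneg]
      exact (kpow_isProb hm _ x').sum_mul_le_one (kpow_isProb hm _ x')
    have hprod := isCoupling_prod (hm x) (hm x')
    calc notMet m (t + 1) (x, x') = ∑ q, m x q.1 * m x' q.2 * notMet m t q := by
          simp [notMet, coalescingKernel, hx]
      _ ≤ ∑ q, m x q.1 * m x' q.2 * (1 - ∑ c, kpow m t q.1 c * kpow m t q.2 c) :=
          sum_le_sum fun q _ => mul_le_mul_of_nonneg_left (ih q.1 q.2) (hprod.1 q)
      _ = 1 - ∑ c, kpow m (t + 1) x c * kpow m (t + 1) x' c := by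
          simp only [mul_sub, mul_one, sum_sub_distrib, hprod.sum_eq_one (hm x)]
          congr 1
          simp only [kpow, mul_sum, sum_mul, Fintype.sum_prod_type]
          calc _ = ∑ a, ∑ c, ∑ a', m x a * m x' a' * (kpow m t a c * kpow m t a' c) :=
                sum_congr rfl fun _ _ => sum_comm
            _ = _ := by
                rw [sum_comm]
                refine sum_congr rfl fun c _ => ?_
                rw [sum_comm]
                exact sum_congr rfl fun _ _ => sum_congr rfl fun _ _ => by ring

lemma notMet_le_one (hm : ∀ x, IsProb (m x)) (t : ℕ) (p : X × X) : notMet m t p ≤ 1 :=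
  (notMet_le_one_sub hm t p.1 p.2).trans (sub_le_self _ (sum_nonneg fun _ _ =>
    mul_nonneg (kpow_nonneg hm _ _ _) (kpow_nonneg hm _ _ _)))

/-- Once `m ^ T` has positive entries, any two independent copies meet within `T` steps with
probability at least some `δ > 0`, so the chains stay apart for `n * T` steps with probability at
most `(1 - δ) ^ n`. -/
lemma eventually_notMet_le [Nonempty X] (hm : ∀ x, IsProb (m x)) (hirr : KernelIrreducible m)
    (haper : KernelAperiodic m) {ε : ℝ} (hε : 0 < ε) :
    ∀ᶠ t in atTop, ∀ p, notMet m t p ≤ ε := by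
  obtain ⟨T, hT⟩ := (eventually_kpow_pos hm hirr haper).exists
  obtain ⟨p₀, hp₀⟩ :=
    Finite.exists_min fun p : X × X => ∑ c, kpow m T p.1 c * kpow m T p.2 c
  set δ := ∑ c, kpow m T p₀.1 c * kpow m T p₀.2 c
  have hδ : 0 < δ := sum_pos (fun c _ => mul_pos (hT _ _) (hT _ _)) univ_nonempty
  have hδ1 : δ ≤ 1 := by
    linarith [notMet_le_one_sub hm T p₀.1 p₀.2, notMet_nonneg hm T (p₀.1, p₀.2)]
  have hblock : ∀ q, notMet m T q ≤ (1 - δ) * notMet m 0 q := by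
    rintro ⟨x, x'⟩
    by_cases hx : x = x'
    · simp [hx, notMet_diag]
    · simpa [notMet, hx] using (notMet_le_one_sub hm T x x').trans (by linarith [hp₀ (x, x')])
  have hpow : ∀ n q, notMet m (n * T) q ≤ (1 - δ) ^ n * notMet m 0 q := by
    intro n
    induction n with
    | zero => simp
    | succ n ih =>
      intro q
      rw [Nat.succ_mul, pow_succ, mul_assoc]
      exact (notMet_add_le hm ih T q).trans
        (mul_le_mul_of_nonneg_left (hblock q) (pow_nonneg (by linarith) n))
  obtain ⟨n, hn⟩ := ((tendsto_pow_atTop_nhds_zero_of_lt_one (by linarith) (by linarith :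
    1 - δ < 1)).eventually (eventually_le_nhds hε)).exists
  filter_upwards [eventually_ge_atTop (n * T)] with t ht p
  rw [← Nat.add_sub_cancel' ht]
  exact (notMet_add_le hm (hpow n) _ p).trans
    (mul_le_of_le_one_right (pow_nonneg (by linarith) n) (notMet_le_one hm _ p) |>.trans hn)

end Coalescing

section WL

variable {X : Type*} [Fintype X] {mX mY : X → X → ℝ}

lemma CmatWL_add (mX mY : X → X → ℝ) (C : X × X → ℝ) (k t : ℕ) :
    CmatWL mX mY C (k + t) = CmatWL mX mY (CmatWL mX mY C k) t := by
  induction t with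
  | zero => rfl
  | succ t ih => funext z; exact congrArg (dW (mX z.1) (mY z.2)) ih

variable [DecidableEq X]

/-- Running the two coalescing chains next to an optimal coupling for `(i', j')` couples the
chains started at `i` and `j`; the costs can only differ where a pair has not met yet. -/
theorem CmatWL_le_add_notMet (hmX : ∀ x, IsProb (mX x)) (hmY : ∀ x, IsProb (mY x))
    {C : X × X → ℝ} {D : ℝ} (hC : ∀ z z', C z ≤ C z' + D) (t : ℕ) (i j i' j' : X) :
    CmatWL mX mY C t (i, j) ≤
      CmatWL mX mY C t (i', j') + D * (notMet mX t (i, i') + notMet mY t (j, j')) := by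
  induction t generalizing i j i' j' with
  | zero =>
    by_cases h : i = i' ∧ j = j'
    · simp [h.1, h.2, notMet]
    have hD : 0 ≤ D := by linarith [hC (i, j) (i, j)]
    have hone : 1 ≤ notMet mX 0 (i, i') + notMet mY 0 (j, j') := by
      rw [not_and_or] at h
      rcases h with h | h <;> simp only [notMet, h, if_false] <;> split_ifs <;> norm_num
    show C (i, j) ≤ C (i', j') + _
    linarith [hC (i, j) (i', j'), le_mul_of_one_le_right hD hone]
  | succ t ih =>
    have h := dW_le_dW_add (hmX i) (hmY j) (hmX i') (hmY j')
      (isCoupling_coalescingKernel hmX (i, i')) (isCoupling_coalescingKernel hmY (j, j'))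
      (cX := fun p => D * notMet mX t p) (cY := fun q => D * notMet mY t q)
      (fun a b a' b' => (ih a b a' b').trans_eq (by ring))
    refine h.trans_eq ?_
    simp only [notMet, mul_add, mul_sum, add_assoc]
    congr 2 <;> exact sum_congr rfl fun _ _ => by ring

end WL

/-- Halving every `T` steps is geometric decay at rate `ρ = 1 - 1 / (2T)`, since `ρ ^ T ≥ 1 / 2`
by Bernoulli's inequality. -/
lemma exists_le_two_mul_pow_mul_of_le_half {D : ℕ → ℝ} {T : ℕ} (hT : 0 < T)
    (hD : ∀ k, 0 ≤ D k) (hanti : Antitone D) (hhalf : ∀ k, D (k + T) ≤ D k / 2) :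
    ∃ ρ : ℝ, 0 ≤ ρ ∧ ρ < 1 ∧ ∀ k, D k ≤ 2 * ρ ^ k * D 0 := by
  set ρ : ℝ := 1 - 1 / (2 * T)
  have hT' : (1 : ℝ) ≤ T := Nat.one_le_cast.2 hT
  have hρ0 : 0 ≤ ρ := by
    rw [sub_nonneg, div_le_one (by positivity)]; linarith
  have hρ1 : ρ < 1 := sub_lt_self _ (by positivity)
  have hρT : 1 / 2 ≤ ρ ^ T := by
    have h := one_add_mul_le_pow (a := -(1 / (2 * (T : ℝ)))) (by
      rw [neg_le_neg_iff, div_le_iff₀ (by positivity)]; linarith) T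
    rw [← sub_eq_add_neg] at h
    refine le_trans (le_of_eq ?_) h
    field_simp
    ring
  have hiter : ∀ n j, D (j + n * T) ≤ (1 / 2) ^ n * D j := by
    intro n
    induction n with
    | zero => simp
    | succ n ih =>
      intro j
      rw [Nat.succ_mul, ← add_assoc, pow_succ]
      linarith [hhalf (j + n * T), ih j]
  refine ⟨ρ, hρ0, hρ1, fun k => ?_⟩
  have hk : k ≤ T * (k / T + 1) := (Nat.lt_mul_div_succ k hT).le
  calc D k = D (k % T + k / T * T) := by rw [Nat.mod_add_div']
    _ ≤ (1 / 2) ^ (k / T) * D (k % T) := hiter _ _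
    _ ≤ (1 / 2) ^ (k / T) * D 0 := mul_le_mul_of_nonneg_left (hanti (Nat.zero_le _)) (by positivity)
    _ = 2 * (1 / 2) ^ (k / T + 1) * D 0 := by ring
    _ ≤ 2 * (ρ ^ T) ^ (k / T + 1) * D 0 := by gcongr; exact hD 0
    _ ≤ 2 * ρ ^ k * D 0 := by
        rw [← pow_mul]
        exact mul_le_mul_of_nonneg_right
          (mul_le_mul_of_nonneg_left (pow_le_pow_of_le_one hρ0 hρ1.le hk) two_pos.le) (hD 0)

section Spread

variable {X : Type*} [Fintype X] [Nonempty X] {mX mY : X → X → ℝ} {C : X × X → ℝ}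

noncomputable def wlMin (mX mY : X → X → ℝ) (C : X × X → ℝ) (k : ℕ) : ℝ :=
  univ.inf' univ_nonempty (CmatWL mX mY C k)

noncomputable def wlMax (mX mY : X → X → ℝ) (C : X × X → ℝ) (k : ℕ) : ℝ :=
  univ.sup' univ_nonempty (CmatWL mX mY C k)

lemma wlMin_le (k : ℕ) (z : X × X) : wlMin mX mY C k ≤ CmatWL mX mY C k z :=
  inf'_le _ (mem_univ z)

lemma le_wlMax (k : ℕ) (z : X × X) : CmatWL mX mY C k z ≤ wlMax mX mY C k :=
  le_sup' _ (mem_univ z)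

lemma wlMin_le_wlMax (k : ℕ) : wlMin mX mY C k ≤ wlMax mX mY C k :=
  (wlMin_le k (Classical.arbitrary _)).trans (le_wlMax k _)

lemma wlMax_sub_wlMin_zero_le_supNorm (hC : ∀ z, 0 ≤ C z) :
    wlMax mX mY C 0 - wlMin mX mY C 0 ≤ supNorm C := by
  have hmin : 0 ≤ wlMin mX mY C 0 := le_inf' _ _ fun z _ => hC z
  have hmax : wlMax mX mY C 0 ≤ supNorm C := sup'_le _ _ fun z _ =>
    (le_abs_self (C z)).trans (le_ciSup (f := fun z => |C z|) (Set.finite_range _).bddAbove z)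
  linarith

variable (hmX : ∀ x, IsProb (mX x)) (hmY : ∀ x, IsProb (mY x))
include hmX hmY

lemma wlMin_mono : Monotone (wlMin mX mY C) :=
  monotone_nat_of_le_succ fun k => le_inf' _ _ fun z _ =>
    le_dW_of_le (hmX z.1) (hmY z.2) (wlMin_le k)

lemma wlMax_anti : Antitone (wlMax mX mY C) :=
  antitone_nat_of_succ_le fun k => sup'_le _ _ fun z _ =>
    dW_le_of_le (hmX z.1) (hmY z.2) (le_wlMax k)

variable [DecidableEq X]

lemma wlMax_sub_wlMin_add_le_half {T : ℕ} (hTX : ∀ p, notMet mX T p ≤ 1 / 4)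
    (hTY : ∀ p, notMet mY T p ≤ 1 / 4) (k : ℕ) :
    wlMax mX mY C (k + T) - wlMin mX mY C (k + T) ≤
      (wlMax mX mY C k - wlMin mX mY C k) / 2 := by
  set D := wlMax mX mY C k - wlMin mX mY C k
  have hD : 0 ≤ D := sub_nonneg.2 (wlMin_le_wlMax k)
  have hclose : ∀ z z', CmatWL mX mY C (k + T) z ≤ CmatWL mX mY C (k + T) z' + D / 2 := by
    rintro ⟨i, j⟩ ⟨i', j'⟩
    rw [CmatWL_add]
    refine (CmatWL_le_add_notMet hmX hmY (D := D) (fun z z' => ?_) T i j i' j').trans ?_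
    · linarith [le_wlMax (mX := mX) (mY := mY) (C := C) k z,
        wlMin_le (mX := mX) (mY := mY) (C := C) k z']
    · nlinarith [hTX (i, i'), hTY (j, j')]
  have hmin : ∀ z, CmatWL mX mY C (k + T) z - D / 2 ≤ wlMin mX mY C (k + T) := fun z =>
    le_inf' _ _ fun z' _ => by linarith [hclose z z']
  have hmax : wlMax mX mY C (k + T) ≤ wlMin mX mY C (k + T) + D / 2 :=
    sup'_le _ _ fun z _ => by linarith [hmin z]
  linarith

theorem exists_wlMax_sub_wlMin_le (hirrX : KernelIrreducible mX) (haperX : KernelAperiodic mX)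
    (hirrY : KernelIrreducible mY) (haperY : KernelAperiodic mY) (hC : ∀ z, 0 ≤ C z) :
    ∃ ρ : ℝ, 0 ≤ ρ ∧ ρ < 1 ∧
      ∀ k, wlMax mX mY C k - wlMin mX mY C k ≤ 2 * ρ ^ k * supNorm C := by
  have hquarter : (0 : ℝ) < 1 / 4 := by norm_num
  obtain ⟨T, hTX, hTY, hT⟩ := ((eventually_notMet_le hmX hirrX haperX hquarter).and
    ((eventually_notMet_le hmY hirrY haperY hquarter).and (eventually_gt_atTop 0))).exists
  obtain ⟨ρ, hρ0, hρ1, hdecay⟩ := exists_le_two_mul_pow_mul_of_le_half hT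
    (fun k => sub_nonneg.2 (wlMin_le_wlMax k))
    (fun a b hab => by linarith [wlMax_anti (C := C) hmX hmY hab, wlMin_mono (C := C) hmX hmY hab])
    (wlMax_sub_wlMin_add_le_half hmX hmY hTX hTY)
  exact ⟨ρ, hρ0, hρ1, fun k => (hdecay k).trans (mul_le_mul_of_nonneg_left
    (wlMax_sub_wlMin_zero_le_supNorm hC) (by positivity))⟩

end Spread
section MarkovCoupling

variable {X : Type*} [Fintype X] {MX MY : MarkovChain X}

instance : Nonempty (MarkovCoupling MX MY) :=
  ⟨⟨fun z => MX.init z.1 * MY.init z.2, fun _ w z => MX.kernel w.1 z.1 * MY.kernel w.2 z.2,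
    isCoupling_prod MX.init_prob MY.init_prob,
    fun _ w => isCoupling_prod (MX.kernel_prob w.1) (MY.kernel_prob w.2)⟩⟩

lemma MarkovCoupling.law_nonneg (π : MarkovCoupling MX MY) (t : ℕ) (z : X × X) :
    0 ≤ π.law t z := by
  induction t generalizing z with
  | zero => exact π.init_coupling.1 z
  | succ t ih => exact sum_nonneg fun w _ => mul_nonneg ((π.trans_coupling t w).1 z) (ih w)

lemma MarkovCoupling.sum_mul_law_succ (π : MarkovCoupling MX MY) (G : X × X → ℝ) (t : ℕ) :
    ∑ z, G z * π.law (t + 1) z = ∑ w, π.law t w * ∑ z, G z * π.trans t w z := by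
  simp only [MarkovCoupling.law, lawAux, mul_sum]
  rw [sum_comm]
  exact sum_congr rfl fun _ _ => sum_congr rfl fun _ _ => by ring

lemma dWL_eq_iInf (k : ℕ) (C : X × X → ℝ) :
    dWL k MX MY C = ⨅ π : MarkovCoupling MX MY, ∑ z, C z * π.law k z := by
  refine congrArg iInf (funext fun π => ?_)
  rw [tsum_eq_single k fun t ht => by simp [diracN, ht]]
  simp [diracN]

lemma sum_CmatWL_mul_law_le (π : MarkovCoupling MX MY) (C : X × X → ℝ) (s j t : ℕ) :
    ∑ z, CmatWL MX.kernel MY.kernel C (s + j) z * π.law t z ≤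
      ∑ z, CmatWL MX.kernel MY.kernel C s z * π.law (t + j) z := by
  induction j generalizing t with
  | zero => rfl
  | succ j ih =>
    refine le_trans ?_ ((ih (t + 1)).trans_eq (by rw [Nat.add_right_comm]; rfl))
    rw [π.sum_mul_law_succ, ← Nat.add_assoc]
    refine sum_le_sum fun w _ => ?_
    rw [mul_comm]
    refine mul_le_mul_of_nonneg_left ?_ (π.law_nonneg t w)
    exact dW_le_sum_mul (MX.kernel_prob w.1) (MY.kernel_prob w.2) (π.trans_coupling t w)

variable [Nonempty X]

lemma wlMin_le_sum_mul_law (π : MarkovCoupling MX MY) (C : X × X → ℝ) (k : ℕ) :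
    wlMin MX.kernel MY.kernel C k ≤ ∑ z, C z * π.law k z := by
  have h := sum_CmatWL_mul_law_le π C 0 k 0
  simp only [zero_add] at h
  exact (π.init_coupling.le_sum_mul MX.init_prob (wlMin_le k)).trans h

lemma wlMin_le_dWL (C : X × X → ℝ) (k : ℕ) :
    wlMin MX.kernel MY.kernel C k ≤ dWL k MX MY C :=
  dWL_eq_iInf k C ▸ le_ciInf fun π => wlMin_le_sum_mul_law π C k

/-- Following at every step an optimal coupling for the remaining depth keeps the expected
cost-to-go constant. -/
lemma exists_markovCoupling_sum_mul_law_le (C : X × X → ℝ) (k : ℕ) :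
    ∃ π : MarkovCoupling MX MY, ∑ z, C z * π.law k z ≤ wlMax MX.kernel MY.kernel C k := by
  choose κ hκ using fun (G : X × X → ℝ) (w : X × X) =>
    exists_isCoupling_sum_eq_dW (MX.kernel_prob w.1) (MY.kernel_prob w.2) G
  let π : MarkovCoupling MX MY :=
    { init := fun z => MX.init z.1 * MY.init z.2
      trans := fun t => κ (CmatWL MX.kernel MY.kernel C (k - 1 - t))
      init_coupling := isCoupling_prod MX.init_prob MY.init_prob
      trans_coupling := fun t w => (hκ _ w).1 }
  have hcost : ∀ j s, j + s = k → ∑ z, CmatWL MX.kernel MY.kernel C s z * π.law j z =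
      ∑ z, CmatWL MX.kernel MY.kernel C k z * π.law 0 z := by
    intro j
    induction j with
    | zero => rintro s rfl; simp
    | succ j ih =>
      intro s hjs
      rw [π.sum_mul_law_succ, ← ih (s + 1) (by omega)]
      have hs : k - 1 - j = s := by omega
      refine sum_congr rfl fun w _ => ?_
      simp only [π, hs, (hκ _ w).2.1]
      exact mul_comm _ _
  refine ⟨π, ?_⟩
  calc ∑ z, C z * π.law k z = ∑ z, CmatWL MX.kernel MY.kernel C k z * π.law 0 z :=
        hcost k 0 rfl
    _ ≤ wlMax MX.kernel MY.kernel C k := π.init_coupling.sum_mul_le MX.init_prob (le_wlMax k)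

lemma dWL_le_wlMax (C : X × X → ℝ) (k : ℕ) :
    dWL k MX MY C ≤ wlMax MX.kernel MY.kernel C k := by
  obtain ⟨π, hπ⟩ := exists_markovCoupling_sum_mul_law_le (MX := MX) (MY := MY) C k
  rw [dWL_eq_iInf]
  exact (ciInf_le ⟨_, by rintro _ ⟨π', rfl⟩; exact wlMin_le_sum_mul_law π' C k⟩ π).trans hπ

end MarkovCoupling


theorem stmt18_general {X : Type*} [Fintype X] [DecidableEq X]
    (dX : X → X → ℝ) (hdX : IsPseudometric dX)
    (mX mY : X → X → ℝ)
    (hmX : ∀ x, IsProb (mX x)) (hmY : ∀ x, IsProb (mY x))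
    (hirrX : KernelIrreducible mX) (haperX : KernelAperiodic mX)
    (hirrY : KernelIrreducible mY) (haperY : KernelAperiodic mY)
    (μX μY : X → ℝ) (hμX : IsProb μX) (hμY : IsProb μY) :
    ∃ c ρ : ℝ, 0 ≤ ρ ∧ ρ < 1 ∧
      Tendsto (fun k =>
          dWL k (⟨mX, μX, hmX, hμX⟩ : MarkovChain X)
            (⟨mY, μY, hmY, hμY⟩ : MarkovChain X)
            (fun z : X × X => dX z.1 z.2)) atTop (𝓝 c) ∧
      ∀ (k : ℕ) (z : X × X),
        |CmatWL mX mY (fun z : X × X => dX z.1 z.2) k z - c| ≤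
          2 * ρ ^ k * supNorm (fun z : X × X => dX z.1 z.2) := by
  have := hμX.nonempty
  set C : X × X → ℝ := fun z => dX z.1 z.2
  set MX : MarkovChain X := ⟨mX, μX, hmX, hμX⟩
  set MY : MarkovChain X := ⟨mY, μY, hmY, hμY⟩
  obtain ⟨ρ, hρ0, hρ1, hspread⟩ := exists_wlMax_sub_wlMin_le hmX hmY hirrX haperX hirrY haperY
    (C := C) fun z => hdX.1 z.1 z.2
  obtain ⟨c, hc⟩ : ∃ c, ∀ k, wlMin mX mY C k ≤ c ∧ c ≤ wlMax mX mY C k :=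
    ⟨_, Set.mem_iInter.1 ((wlMin_mono hmX hmY).ciSup_mem_iInter_Icc_of_antitone
      (wlMax_anti hmX hmY) wlMin_le_wlMax)⟩
  have hclose : ∀ k x, wlMin mX mY C k ≤ x → x ≤ wlMax mX mY C k →
      |x - c| ≤ 2 * ρ ^ k * supNorm C := fun k x h₁ h₂ =>
    abs_sub_le_iff.2 ⟨by linarith [hc k, hspread k], by linarith [hc k, hspread k]⟩
  refine ⟨c, ρ, hρ0, hρ1, ?_, fun k z => hclose k _ (wlMin_le k z) (le_wlMax k z)⟩
  rw [tendsto_iff_norm_sub_tendsto_zero]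
  refine squeeze_zero (fun k => norm_nonneg _)
    (fun k => hclose k _ (wlMin_le_dWL (MX := MX) (MY := MY) C k) (dWL_le_wlMax C k)) ?_
  simpa using ((tendsto_pow_atTop_nhds_zero_of_lt_one hρ0 hρ1).const_mul 2).mul_const (supNorm C)

/-- With a pseudometric cost and irreducible aperiodic kernels, the WL cost
matrices `C^{(k)}` converge exponentially fast to the constant matrix whose
value `c` is the limit of the depth-`k` WL distances between the stationary
chains: `|C^{(k)}_{ij} − c| ≤ 2 ρ^k ‖C‖_∞` for some `ρ ∈ [0,1)`. -/
theorem stmt18 {X : Type*} [Fintype X] [DecidableEq X]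
    (dX : X → X → ℝ) (hdX : IsPseudometric dX)
    (mX mY : X → X → ℝ)
    (hmX : ∀ x, IsProb (mX x)) (hmY : ∀ x, IsProb (mY x))
    (hirrX : KernelIrreducible mX) (haperX : KernelAperiodic mX)
    (hirrY : KernelIrreducible mY) (haperY : KernelAperiodic mY)
    (μX μY : X → ℝ) (hμX : IsProb μX) (hμY : IsProb μY)
    (hstatX : IsStationaryFor mX μX) (hstatY : IsStationaryFor mY μY)
    (huniqX : ∀ μ, IsProb μ → IsStationaryFor mX μ → μ = μX)
    (huniqY : ∀ μ, IsProb μ → IsStationaryFor mY μ → μ = μY) :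
    ∃ c ρ : ℝ, 0 ≤ ρ ∧ ρ < 1 ∧
      Tendsto (fun k =>
          dWL k (⟨mX, μX, hmX, hμX⟩ : MarkovChain X)
            (⟨mY, μY, hmY, hμY⟩ : MarkovChain X)
            (fun z : X × X => dX z.1 z.2)) atTop (𝓝 c) ∧
      ∀ (k : ℕ) (z : X × X),
        |CmatWL mX mY (fun z : X × X => dX z.1 z.2) k z - c| ≤
          2 * ρ ^ k * supNorm (fun z : X × X => dX z.1 z.2) :=
  stmt18_general dX hdX mX mY hmX hmY hirrX haperX hirrY haperY μX μY hμX hμY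
end

section
/- Let 𝒳, 𝒴 be finite Markov chains with |X| = n, |Y| = m, let C be a cost matrix, δ ∈ (0,1], and ε ≥ 0. Then: (1) the map D ↦ (δ C_{ij} + (1−δ) d_W^ε(m^X_i, m^Y_j; D))_{ij} on real n×m matrices has a unique fixed point C^{ε,δ,(∞)}, and the iterates satisfy ‖C^{ε,δ,(k)} − C^{ε,δ,(∞)}‖_∞ ≤ ((1−δ)^k/δ)·(2‖C‖_∞ + ε·log(nm)); (2) consequently the limit d_WL^{δ,ε,(∞)}(𝒳,𝒴;C) := lim_{k→∞} d_WL^{δ,ε,(k)}(𝒳,𝒴;C) exists, equals d_W^ε(ν^X, ν^Y; C^{ε,δ,(∞)}), and |d_WL^{δ,ε,(k)}(𝒳,𝒴;C) − d_WL^{δ,ε,(∞)}(𝒳,𝒴;C)| ≤ ((1−δ)^k/δ)·(2‖C‖_∞ + ε·log(nm)). -/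
open scoped BigOperators
open Filter Topology

/-- The entropy-regularized optimal transport cost (`Real.log 0 = 0`, so the
convention `0 · log 0 = 0` holds automatically). -/
noncomputable def dWeps {X Y : Type*} [Fintype X] [Fintype Y] (ε : ℝ)
    (α : X → ℝ) (β : Y → ℝ) (C : X × Y → ℝ) : ℝ :=
  ⨅ μ : {μ : X × Y → ℝ // IsCoupling μ α β},
    (∑ z : X × Y, C z * μ.1 z + ε * ∑ z : X × Y, μ.1 z * Real.log (μ.1 z))

/-- The recursively defined cost matrices `C^{ε,δ,(l)}`. -/
noncomputable def CmatEps {X Y : Type*} [Fintype X] [Fintype Y]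
    (MX : MarkovChain X) (MY : MarkovChain Y) (C : X × Y → ℝ) (ε δ : ℝ) :
    ℕ → X × Y → ℝ
  | 0 => C
  | l + 1 => fun z =>
      δ * C z + (1 - δ) * dWeps ε (MX.kernel z.1) (MY.kernel z.2) (CmatEps MX MY C ε δ l)

/-- The depth-`k` entropy-regularized δ-discounted WL distance `d_WL^{δ,ε,(k)}`. -/
noncomputable def dWLke {X Y : Type*} [Fintype X] [Fintype Y]
    (MX : MarkovChain X) (MY : MarkovChain Y) (C : X × Y → ℝ) (ε δ : ℝ) (k : ℕ) : ℝ :=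
  dWeps ε MX.init MY.init (CmatEps MX MY C ε δ k)

lemma abs_le_supNorm' {Z : Type*} [Fintype Z] (C : Z → ℝ) (z : Z) : |C z| ≤ supNorm C :=
  le_ciSup (Set.Finite.bddAbove (Set.finite_range (fun z => |C z|))) z

lemma supNorm_nonneg' {Z : Type*} [Fintype Z] [Nonempty Z] (C : Z → ℝ) : 0 ≤ supNorm C :=
  le_trans (abs_nonneg _) (abs_le_supNorm' C (Classical.arbitrary Z))

lemma entropy_ge' {Z : Type*} [Fintype Z] [Nonempty Z] (μ : Z → ℝ) (hμ0 : ∀ z, 0 ≤ μ z)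
    (hμ1 : ∑ z, μ z = 1) :
    -Real.log (Fintype.card Z) ≤ ∑ z, μ z * Real.log (μ z) := by
  set N : ℝ := (Fintype.card Z : ℝ) with hNdef
  have hN : 0 < N := by positivity
  have key : ∀ t : ℝ, 0 ≤ t → t - 1 / N ≤ t * Real.log t + t * Real.log N := by
    intro t ht
    rcases eq_or_lt_of_le ht with h | h
    · simp [← h]
      positivity
    · have ht0 : t ≠ 0 := ne_of_gt h
      have htN : 0 < t * N := mul_pos h hN
      have hlog : 1 - (t * N)⁻¹ ≤ Real.log (t * N) := by
        have := Real.log_le_sub_one_of_pos (x := (t * N)⁻¹) (by positivity)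
        rw [Real.log_inv] at this
        linarith
      have : t * (1 - (t * N)⁻¹) ≤ t * Real.log (t * N) := by
        exact mul_le_mul_of_nonneg_left hlog ht
      rw [Real.log_mul ht0 (ne_of_gt hN)] at this
      have hrw : t * (1 - (t * N)⁻¹) = t - 1 / N := by
        field_simp
      rw [hrw] at this
      linarith [this]
  have hsum : ∑ z, (μ z - 1 / N) ≤ ∑ z, (μ z * Real.log (μ z) + μ z * Real.log N) :=
    Finset.sum_le_sum fun z _ => key (μ z) (hμ0 z)
  have h1 : ∑ z, (μ z - 1 / N) = 0 := by
    rw [Finset.sum_sub_distrib, hμ1, Finset.sum_const]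
    have : (Fintype.card Z : ℝ) * (1 / N) = 1 := by
      rw [hNdef]; field_simp
    simp only [nsmul_eq_mul, Finset.card_univ]
    rw [this]; ring
  have h2 : ∑ z, (μ z * Real.log (μ z) + μ z * Real.log N)
      = (∑ z, μ z * Real.log (μ z)) + Real.log N := by
    rw [Finset.sum_add_distrib, ← Finset.sum_mul, hμ1, one_mul]
  rw [h1, h2] at hsum
  linarith


section dW
variable {X Y : Type*} [Fintype X] [Fintype Y] [Nonempty X] [Nonempty Y]
variable {α : X → ℝ} {β : Y → ℝ}

lemma coupling_prod (hα : IsProb α) (hβ : IsProb β) :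
    IsCoupling (fun z : X × Y => α z.1 * β z.2) α β := by
  refine ⟨fun z => mul_nonneg (hα.1 _) (hβ.1 _), fun x => ?_, fun y => ?_⟩
  · simp only [← Finset.mul_sum, hβ.2, mul_one]
  · simp only [← Finset.sum_mul, hα.2, one_mul]

lemma coupling_sum_one (hα : IsProb α) {μ : X × Y → ℝ} (hμ : IsCoupling μ α β) :
    ∑ z : X × Y, μ z = 1 := by
  rw [Fintype.sum_prod_type]
  simp only [hμ.2.1]
  exact hα.2

lemma coupling_le_one (hα : IsProb α) {μ : X × Y → ℝ} (hμ : IsCoupling μ α β) (z : X × Y) :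
    μ z ≤ 1 := by
  rw [← coupling_sum_one hα hμ]
  exact Finset.single_le_sum (f := μ) (fun w _ => hμ.1 w) (Finset.mem_univ z)

lemma obj_ge {ε : ℝ} (hε : 0 ≤ ε) (hα : IsProb α) (D : X × Y → ℝ)
    {μ : X × Y → ℝ} (hμ : IsCoupling μ α β) :
    -supNorm D - ε * Real.log ((Fintype.card X : ℝ) * (Fintype.card Y : ℝ)) ≤
      ∑ z : X × Y, D z * μ z + ε * ∑ z : X × Y, μ z * Real.log (μ z) := by
  have h1 : -supNorm D ≤ ∑ z : X × Y, D z * μ z := by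
    calc -supNorm D = ∑ z : X × Y, (-supNorm D) * μ z := by
            rw [← Finset.mul_sum, coupling_sum_one hα hμ, mul_one]
      _ ≤ ∑ z : X × Y, D z * μ z := by
            refine Finset.sum_le_sum fun z _ => mul_le_mul_of_nonneg_right ?_ (hμ.1 z)
            have := abs_le_supNorm' D z
            cases abs_le.mp this with
            | intro h h' => linarith
  have hcard : ((Fintype.card X : ℝ) * (Fintype.card Y : ℝ)) = (Fintype.card (X × Y) : ℝ) := by
    rw [Fintype.card_prod]; push_cast; ring
  have h2 : -Real.log ((Fintype.card X : ℝ) * (Fintype.card Y : ℝ)) ≤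
      ∑ z : X × Y, μ z * Real.log (μ z) := by
    rw [hcard]
    exact entropy_ge' μ hμ.1 (coupling_sum_one hα hμ)
  have h2' : ε * (-Real.log ((Fintype.card X : ℝ) * (Fintype.card Y : ℝ))) ≤
      ε * ∑ z : X × Y, μ z * Real.log (μ z) := mul_le_mul_of_nonneg_left h2 hε
  linarith

lemma obj_le_supNorm {ε : ℝ} (hε : 0 ≤ ε) (hα : IsProb α) (D : X × Y → ℝ)
    {μ : X × Y → ℝ} (hμ : IsCoupling μ α β) :
    ∑ z : X × Y, D z * μ z + ε * ∑ z : X × Y, μ z * Real.log (μ z) ≤ supNorm D := by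
  have h1 : ∑ z : X × Y, D z * μ z ≤ supNorm D := by
    calc ∑ z : X × Y, D z * μ z ≤ ∑ z : X × Y, supNorm D * μ z := by
            refine Finset.sum_le_sum fun z _ => mul_le_mul_of_nonneg_right ?_ (hμ.1 z)
            exact le_trans (le_abs_self _) (abs_le_supNorm' D z)
      _ = supNorm D := by rw [← Finset.mul_sum, coupling_sum_one hα hμ, mul_one]
  have h2 : ε * ∑ z : X × Y, μ z * Real.log (μ z) ≤ 0 := by
    apply mul_nonpos_of_nonneg_of_nonpos hε
    apply Finset.sum_nonpos
    intro z _
    apply mul_nonpos_of_nonneg_of_nonpos (hμ.1 z)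
    exact Real.log_nonpos (hμ.1 z) (coupling_le_one hα hμ z)
  linarith

lemma bddBelow_obj {ε : ℝ} (hε : 0 ≤ ε) (hα : IsProb α) (D : X × Y → ℝ) :
    BddBelow (Set.range fun μ : {μ : X × Y → ℝ // IsCoupling μ α β} =>
      ∑ z : X × Y, D z * μ.1 z + ε * ∑ z : X × Y, μ.1 z * Real.log (μ.1 z)) := by
  refine ⟨-supNorm D - ε * Real.log ((Fintype.card X : ℝ) * (Fintype.card Y : ℝ)), ?_⟩
  rintro r ⟨μ, rfl⟩
  exact obj_ge hε hα D μ.2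

lemma dWeps_le_obj {ε : ℝ} (hε : 0 ≤ ε) (hα : IsProb α) (D : X × Y → ℝ)
    (μ : {μ : X × Y → ℝ // IsCoupling μ α β}) :
    dWeps ε α β D ≤ ∑ z : X × Y, D z * μ.1 z + ε * ∑ z : X × Y, μ.1 z * Real.log (μ.1 z) :=
  ciInf_le (bddBelow_obj hε hα D) μ

lemma dWeps_le_supNorm {ε : ℝ} (hε : 0 ≤ ε) (hα : IsProb α) (hβ : IsProb β) (D : X × Y → ℝ) :
    dWeps ε α β D ≤ supNorm D :=
  le_trans (dWeps_le_obj hε hα D ⟨_, coupling_prod hα hβ⟩) (obj_le_supNorm hε hα D (coupling_prod hα hβ))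

lemma dWeps_ge {ε : ℝ} (hε : 0 ≤ ε) (hα : IsProb α) (hβ : IsProb β) (D : X × Y → ℝ) :
    -supNorm D - ε * Real.log ((Fintype.card X : ℝ) * (Fintype.card Y : ℝ)) ≤ dWeps ε α β D := by
  have : Nonempty {μ : X × Y → ℝ // IsCoupling μ α β} := ⟨⟨_, coupling_prod hα hβ⟩⟩
  exact le_ciInf fun μ => obj_ge hε hα D μ.2

lemma dWeps_le_add {ε : ℝ} (hε : 0 ≤ ε) (hα : IsProb α) (hβ : IsProb β)
    {D D' : X × Y → ℝ} {c : ℝ} (hc : ∀ z, |D z - D' z| ≤ c) :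
    dWeps ε α β D ≤ dWeps ε α β D' + c := by
  have : Nonempty {μ : X × Y → ℝ // IsCoupling μ α β} := ⟨⟨_, coupling_prod hα hβ⟩⟩
  have key : ∀ μ : {μ : X × Y → ℝ // IsCoupling μ α β},
      dWeps ε α β D - c ≤
        ∑ z : X × Y, D' z * μ.1 z + ε * ∑ z : X × Y, μ.1 z * Real.log (μ.1 z) := by
    intro μ
    have h1 := dWeps_le_obj hε hα D μ
    have h2 : ∑ z : X × Y, D z * μ.1 z ≤ ∑ z : X × Y, D' z * μ.1 z + c := by
      have : ∑ z : X × Y, D z * μ.1 z - ∑ z : X × Y, D' z * μ.1 z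
          = ∑ z : X × Y, (D z - D' z) * μ.1 z := by
        rw [← Finset.sum_sub_distrib]; congr 1; ext z; ring
      have hle : ∑ z : X × Y, (D z - D' z) * μ.1 z ≤ c := by
        calc ∑ z : X × Y, (D z - D' z) * μ.1 z ≤ ∑ z : X × Y, c * μ.1 z := by
              refine Finset.sum_le_sum fun z _ => mul_le_mul_of_nonneg_right ?_ (μ.2.1 z)
              exact le_trans (le_abs_self _) (hc z)
          _ = c := by rw [← Finset.mul_sum, coupling_sum_one hα μ.2, mul_one]
      linarith
    linarith
  have := le_ciInf key
  unfold dWeps at *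
  linarith

lemma abs_dWeps_sub {ε : ℝ} (hε : 0 ≤ ε) (hα : IsProb α) (hβ : IsProb β)
    {D D' : X × Y → ℝ} {c : ℝ} (hc : ∀ z, |D z - D' z| ≤ c) :
    |dWeps ε α β D - dWeps ε α β D'| ≤ c := by
  rw [abs_sub_le_iff]
  constructor
  · linarith [dWeps_le_add hε hα hβ hc]
  · have hc' : ∀ z, |D' z - D z| ≤ c := fun z => by rw [abs_sub_comm]; exact hc z
    linarith [dWeps_le_add hε hα hβ hc']

end dW


noncomputable def Tmap {X Y : Type*} [Fintype X] [Fintype Y]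
    (MX : MarkovChain X) (MY : MarkovChain Y) (C : X × Y → ℝ) (ε δ : ℝ)
    (D : X × Y → ℝ) : X × Y → ℝ :=
  fun z => δ * C z + (1 - δ) * dWeps ε (MX.kernel z.1) (MY.kernel z.2) D

section main
variable {X Y : Type*} [Fintype X] [Fintype Y] [Nonempty X] [Nonempty Y]

lemma CmatEps_eq_iterate (MX : MarkovChain X) (MY : MarkovChain Y)
    (C : X × Y → ℝ) (ε δ : ℝ) (k : ℕ) :
    CmatEps MX MY C ε δ k = (Tmap MX MY C ε δ)^[k] C := by
  induction k with
  | zero => rfl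
  | succ l ih =>
    rw [Function.iterate_succ_apply', ← ih]
    rfl

lemma tmap_lipschitz (MX : MarkovChain X) (MY : MarkovChain Y)
    (C : X × Y → ℝ) {ε δ : ℝ} (hε : 0 ≤ ε) (hδ0 : 0 < δ) (hδ1 : δ ≤ 1) :
    LipschitzWith (Real.toNNReal (1 - δ)) (Tmap MX MY C ε δ) := by
  apply LipschitzWith.of_dist_le_mul
  intro D D'
  rw [dist_pi_le_iff (by positivity)]
  intro z
  have hd : ∀ w : X × Y, |D w - D' w| ≤ dist D D' := fun w => by
    rw [← Real.dist_eq]; exact dist_le_pi_dist D D' w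
  have hW := abs_dWeps_sub hε (MX.kernel_prob z.1) (MY.kernel_prob z.2) hd
  simp only [Tmap, Real.dist_eq]
  have : δ * C z + (1 - δ) * dWeps ε (MX.kernel z.1) (MY.kernel z.2) D -
      (δ * C z + (1 - δ) * dWeps ε (MX.kernel z.1) (MY.kernel z.2) D') =
      (1 - δ) * (dWeps ε (MX.kernel z.1) (MY.kernel z.2) D -
        dWeps ε (MX.kernel z.1) (MY.kernel z.2) D') := by ring
  rw [this, abs_mul, abs_of_nonneg (by linarith : (0:ℝ) ≤ 1 - δ)]
  rw [Real.coe_toNNReal _ (by linarith : (0:ℝ) ≤ 1 - δ)]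
  exact mul_le_mul_of_nonneg_left hW (by linarith)

end main

/-- For `δ ∈ (0,1]` and `ε ≥ 0`: the entropy-regularized iteration has a unique
fixed point `C^{ε,δ,(∞)}` among real matrices, the iterates converge to it at
rate `((1-δ)^k/δ)·(2‖C‖_∞ + ε log(nm))`, and consequently
`d_WL^{δ,ε,(∞)} = lim_k d_WL^{δ,ε,(k)}` exists, equals
`d_W^ε(ν^X, ν^Y; C^{ε,δ,(∞)})`, and is approximated by `d_WL^{δ,ε,(k)}` with
the same rate. -/
theorem stmt19 {X Y : Type*} [Fintype X] [Fintype Y] [Nonempty X] [Nonempty Y]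
    (MX : MarkovChain X) (MY : MarkovChain Y)
    (C : X × Y → ℝ) (hC : ∀ z, 0 ≤ C z)
    (δ : ℝ) (hδ0 : 0 < δ) (hδ1 : δ ≤ 1) (ε : ℝ) (hε : 0 ≤ ε) :
    ∃ Cinf : X × Y → ℝ,
      (∀ z : X × Y,
        Cinf z = δ * C z + (1 - δ) * dWeps ε (MX.kernel z.1) (MY.kernel z.2) Cinf) ∧
      (∀ D : X × Y → ℝ,
        (∀ z : X × Y,
          D z = δ * C z + (1 - δ) * dWeps ε (MX.kernel z.1) (MY.kernel z.2) D) →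
        D = Cinf) ∧
      (∀ k : ℕ,
        supNorm (fun z => CmatEps MX MY C ε δ k z - Cinf z) ≤
          (1 - δ) ^ k / δ *
            (2 * supNorm C +
              ε * Real.log ((Fintype.card X : ℝ) * (Fintype.card Y : ℝ)))) ∧
      Tendsto (fun k => dWLke MX MY C ε δ k) atTop
        (𝓝 (dWeps ε MX.init MY.init Cinf)) ∧
      (∀ k : ℕ,
        |dWLke MX MY C ε δ k - dWeps ε MX.init MY.init Cinf| ≤
          (1 - δ) ^ k / δ *
            (2 * supNorm C +
              ε * Real.log ((Fintype.card X : ℝ) * (Fintype.card Y : ℝ)))) := by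
  set N : ℝ := (Fintype.card X : ℝ) * (Fintype.card Y : ℝ) with hNdef
  set M : ℝ := 2 * supNorm C + ε * Real.log N with hMdef
  have hNge1 : (1:ℝ) ≤ N := by
    have h1 : (1:ℝ) ≤ (Fintype.card X : ℝ) := by exact_mod_cast Fintype.card_pos
    have h2 : (1:ℝ) ≤ (Fintype.card Y : ℝ) := by exact_mod_cast Fintype.card_pos
    nlinarith
  have hlogN : 0 ≤ Real.log N := Real.log_nonneg hNge1
  have hsupC : 0 ≤ supNorm C := supNorm_nonneg' C
  have hMnn : 0 ≤ M := by positivity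
  have h1δ : (0:ℝ) ≤ 1 - δ := by linarith
  set K : NNReal := Real.toNNReal (1 - δ) with hKdef
  have hK : (K : ℝ) = 1 - δ := Real.coe_toNNReal _ h1δ
  have hKlt : K < 1 := by
    rw [← NNReal.coe_lt_coe, hK, NNReal.coe_one]; linarith
  have hcontr : ContractingWith K (Tmap MX MY C ε δ) :=
    ⟨hKlt, tmap_lipschitz MX MY C hε hδ0 hδ1⟩
  set f := Tmap MX MY C ε δ with hfdef
  set Cinf : X × Y → ℝ := ContractingWith.fixedPoint f hcontr with hCinf
  have hfix : f Cinf = Cinf := hcontr.fixedPoint_isFixedPt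
  refine ⟨Cinf, fun z => (congrFun hfix z).symm, ?_, ?_, ?_, ?_⟩
  · intro D hD
    exact hcontr.fixedPoint_unique (funext fun z => (hD z).symm)
  all_goals {
    have hd0 : dist C (f C) ≤ (1 - δ) * M := by
      rw [dist_pi_le_iff (by positivity)]
      intro z
      have hF1 := dWeps_le_supNorm (β := MY.kernel z.2) hε (MX.kernel_prob z.1)
        (MY.kernel_prob z.2) C
      have hF2 := dWeps_ge (β := MY.kernel z.2) hε (MX.kernel_prob z.1) (MY.kernel_prob z.2) C
      rw [← hNdef] at hF2
      have hCz := abs_le.mp (abs_le_supNorm' C z)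
      have heq : C z - f C z = (1 - δ) * (C z - dWeps ε (MX.kernel z.1) (MY.kernel z.2) C) := by
        simp only [hfdef, Tmap]; ring
      rw [Real.dist_eq, heq, abs_mul, abs_of_nonneg h1δ]
      apply mul_le_mul_of_nonneg_left _ h1δ
      rw [abs_le, hMdef]
      exact ⟨by linarith [hCz.1, hCz.2, mul_nonneg hε hlogN],
        by linarith [hCz.1, hCz.2, mul_nonneg hε hlogN]⟩
    have hrate : ∀ k : ℕ, dist (CmatEps MX MY C ε δ k) Cinf ≤ (1 - δ) ^ k / δ * M := by
      intro k
      have h := hcontr.apriori_dist_iterate_fixedPoint_le C k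
      rw [← CmatEps_eq_iterate] at h
      have h1K : 1 - (K : ℝ) = δ := by rw [hK]; ring
      rw [h1K, hK] at h
      have hdM : dist C (f C) ≤ M := hd0.trans (by nlinarith)
      calc dist (CmatEps MX MY C ε δ k) Cinf ≤ dist C (f C) * (1 - δ) ^ k / δ := h
        _ ≤ M * (1 - δ) ^ k / δ := by
            gcongr
        _ = (1 - δ) ^ k / δ * M := by ring
    have hsup : ∀ k : ℕ, supNorm (fun z => CmatEps MX MY C ε δ k z - Cinf z) ≤
        dist (CmatEps MX MY C ε δ k) Cinf := by
      intro k
      apply ciSup_le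
      intro z
      rw [← Real.dist_eq]
      exact dist_le_pi_dist _ _ z
    have habs : ∀ k : ℕ, |dWLke MX MY C ε δ k - dWeps ε MX.init MY.init Cinf| ≤
        (1 - δ) ^ k / δ * M := by
      intro k
      refine le_trans (abs_dWeps_sub hε MX.init_prob MY.init_prob
        (fun z => ?_)) (hrate k)
      rw [← Real.dist_eq]
      exact dist_le_pi_dist _ _ z
    first
      | exact fun k => le_trans (hsup k) (hrate k)
      | exact habs
      | ( -- Tendsto goal
        rw [tendsto_iff_dist_tendsto_zero]
        apply squeeze_zero (fun k => dist_nonneg)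
          (g := fun k => (1 - δ) ^ k / δ * M)
          (fun k => by rw [Real.dist_eq]; exact habs k)
        have hpow : Tendsto (fun k : ℕ => (1 - δ) ^ k) atTop (𝓝 0) :=
          tendsto_pow_atTop_nhds_zero_of_lt_one h1δ (by linarith)
        have := hpow.mul_const (M / δ)
        rw [zero_mul] at this
        refine this.congr fun k => ?_
        field_simp )
  }
end
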